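/- arXiv:2303.02634 — 2 statements merged into one kernel-verified Lean document; each statement's English description precedes it below -/
import Mathlib

section
/- Let I be an ideal of a commutative ring R and consider R with the I-adic topology. Then I is a connected subset of R (with respect to the I-adic topology) if and only if I is an idempotent ideal, i.e., I = I². -/
/-- With the `I`-adic topology on a commutative ring `R`, the ideal `I` is a
connected subset of `R` if and only if `I` is idempotent, i.e. `I = I²`. -/
theorem stmt9 (R : Type*) [CommRing R] (I : Ideal R) :
    @IsConnected R I.adicTopology (I : Set R) ↔ I = I ^ 2 := by
  letI : TopologicalSpace R := I.adicTopology
  haveI : NonarchimedeanRing R := I.nonarchimedean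
  have hpow : ∀ n : ℕ, IsOpen ((I ^ n : Ideal R) : Set R) := fun n =>
    (I.openAddSubgroup n).isOpen
  constructor
  · intro hconn
    by_contra hne
    have hle : I ^ 2 ≤ I := Ideal.pow_le_self two_ne_zero
    have : ¬ I ≤ I ^ 2 := fun h => hne (le_antisymm h hle)
    obtain ⟨x, hxI, hx2⟩ := SetLike.not_le_iff_exists.mp this
    have hU : IsOpen ((I ^ 2 : Ideal R) : Set R) := hpow 2
    have hV : IsOpen (((I ^ 2 : Ideal R) : Set R)ᶜ) := by
      have hc := AddSubgroup.isClosed_of_isOpen (I ^ 2).toAddSubgroup (by simpa using hU)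
      simpa using hc.isOpen_compl
    have := hconn.2 _ _ hU hV (by intro y _; exact (em _).imp id id)
      ⟨0, I.zero_mem, (I ^ 2).zero_mem⟩ ⟨x, hxI, hx2⟩
    obtain ⟨y, _, hy1, hy2⟩ := this
    exact hy2 hy1
  · intro hI
    have hsub : ∀ n : ℕ, (I : Set R) ⊆ ((I ^ n : Ideal R) : Set R) := by
      intro n
      induction n with
      | zero => simp
      | succ n ih =>
        intro y hy
        have hIn : I ≤ I ^ n := ih
        have h2 : y ∈ I ^ 2 := hI ▸ hy
        have hle : I ^ 2 ≤ I ^ (n + 1) := by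
          rw [sq, pow_succ]
          exact Ideal.mul_mono_left hIn
        exact hle h2
    -- key: any open set meeting I contains I
    have key : ∀ U : Set R, IsOpen U → ∀ x ∈ U, x ∈ (I : Set R) → (I : Set R) ⊆ U := by
      intro U hU x hxU hxI
      have hmem : U ∈ nhds x := hU.mem_nhds hxU
      obtain ⟨n, -, hn⟩ := (I.hasBasis_nhds_adic x).mem_iff.mp hmem
      intro z hz
      have : z - x ∈ (I : Set R) := I.sub_mem hz hxI
      have : z - x ∈ ((I ^ n : Ideal R) : Set R) := hsub n this
      have : x + (z - x) ∈ U := hn ⟨z - x, this, rfl⟩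
      simpa using this
    refine ⟨⟨0, I.zero_mem⟩, ?_⟩
    intro U V hU hV _ ⟨a, haI, haU⟩ ⟨b, hbI, hbV⟩
    exact ⟨0, I.zero_mem, key U hU a haU haI I.zero_mem, key V hV b hbV hbI I.zero_mem⟩
end

section
/- Let R be a commutative topological ring which is Hausdorff, and suppose there exists a nonzero zerodivisor x ∈ R (i.e., x ≠ 0 and there exists b ≠ 0 with xb = 0) such that the map f : R → R given by r ↦ rx is a closed map. If the set Z(R) of zerodivisors of R is a compact subset of R, then R is compact. -/
/-!
Multiplication by `x` is a continuous, closed additive map `f`. Its kernel `Ann(x)` and its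
image `R x` are closed subsets of `Z(R)`: an element killing `x ≠ 0` is a zerodivisor, and
`r x b = 0` for the given `b ≠ 0`. Both are therefore compact. The fibres of `f` are translates
of the kernel, so `f` is proper, and `R = f⁻¹(R x)` is compact.
-/

open Set

namespace AddMonoidHom

variable {G H : Type*} [AddGroup G] [AddGroup H]

theorem preimage_singleton_apply_eq_image_add_ker (f : G →+ H) (a : G) :
    f ⁻¹' {f a} = (a + ·) '' (f.ker : Set G) := by
  ext r
  simp only [mem_preimage, mem_singleton_iff, mem_image, SetLike.mem_coe, mem_ker]
  constructor
  · intro hr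
    exact ⟨-a + r, by rw [map_add, map_neg, hr, neg_add_cancel], add_neg_cancel_left a r⟩
  · rintro ⟨k, hk, rfl⟩
    rw [map_add, hk, add_zero]

theorem isProperMap_of_isClosedMap [TopologicalSpace G] [ContinuousAdd G] [TopologicalSpace H]
    (f : G →+ H) (hf : Continuous f) (hcl : IsClosedMap f) (hker : IsCompact (f.ker : Set G)) :
    IsProperMap f := by
  refine isProperMap_iff_isClosedMap_and_compact_fibers.mpr ⟨hf, hcl, fun y => ?_⟩
  by_cases hy : y ∈ range f
  · obtain ⟨a, rfl⟩ := hy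
    rw [preimage_singleton_apply_eq_image_add_ker]
    exact hker.image (continuous_const_add a)
  · rw [preimage_singleton_eq_empty.mpr hy]
    exact isCompact_empty

end AddMonoidHom

/-- Let `R` be a Hausdorff commutative topological ring, and suppose there
is a nonzero zerodivisor `x` such that `r ↦ r * x` is a closed map. If the set of
zerodivisors of `R` is compact, then `R` is compact. -/
theorem stmt16 (R : Type*) [CommRing R] [TopologicalSpace R] [IsTopologicalRing R]
    [T2Space R] (x : R) (hx : x ≠ 0) (hxzd : ∃ b : R, b ≠ 0 ∧ x * b = 0)
    (hclosed : IsClosedMap fun r : R => r * x)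
    (hZ : IsCompact {a : R | ∃ b : R, b ≠ 0 ∧ a * b = 0}) :
    CompactSpace R := by
  obtain ⟨b, hb, hxb⟩ := hxzd
  let f := AddMonoidHom.mulRight x
  have hf : Continuous f := continuous_mul_const x
  have hker : IsCompact (f.ker : Set R) := by
    refine hZ.of_isClosed_subset (f.coe_ker ▸ isClosed_singleton.preimage hf) fun r hr => ?_
    rcases eq_or_ne r 0 with rfl | hr0
    · exact ⟨b, hb, zero_mul b⟩
    · exact ⟨x, hx, hr⟩
  have hrange : IsCompact (range f) :=
    hZ.of_isClosed_subset hclosed.isClosed_range <| by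
      rintro _ ⟨r, rfl⟩
      exact ⟨b, hb, by simp [f, mul_assoc, hxb]⟩
  have huniv := (f.isProperMap_of_isClosedMap hf hclosed hker).isCompact_preimage hrange
  rw [preimage_range] at huniv
  exact isCompact_univ_iff.mp huniv
end
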